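/- Let (v̄₁, v̄₂), where v̄_i = (v₀^i, v₁^i, ..., v_k^i) for i = 1,2, be a pair of compatible walks in G_d. If (v̄₁, v̄₂) is not a pair of separating walks in G_d, then for each neighbour v_{k+1}^1 ∈ V_d of v_k^1 there is a neighbour v_{k+1}^2 ∈ V_d of v_k^2 with π_d(v_{k+1}^1, v_k^1) = π_d(v_{k+1}^2, v_k^2), and conversely for each neighbour of v_k^2 there is a corresponding neighbour of v_k^1. -/

import Mathlib

/-! Every node `v` of `G_d` of length `< 2d` has exactly `d` neighbours, and their ports
`π_d(x, v)` are pairwise distinct. If the PCW is not separating, every port seen from the end of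
the first walk is also seen from the end of the second; both port sets having `d` elements,
they coincide, which gives the converse matching. -/

namespace Paper

/-- Nodes of the tree `G_d` are finite sequences of pairs of numbers.
We represent a sequence `(a₁, …, a_i)` as the list `[a_i, …, a₁]`, i.e. in
reverse order, so that consing corresponds to appending a pair at the end. -/
abbrev Nd : Type := ℕ × ℕ

/-- `b₂⁺`: `1` if `b₂ = 0`, and `b₂` otherwise. -/
def bplus (b : ℕ) : ℕ := if b = 0 then 1 else b

/-- For `j ≥ 1`, the `j`-th smallest element of `{lo, lo+1, lo+2, …} \ {f}`.
This realises the greedy choices `c^j = min({lo,…} \ {f, c¹, …, c^{j-1}})`. -/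
def nthAvoid (lo f j : ℕ) : ℕ :=
  if lo + j - 1 < f ∨ f < lo then lo + j - 1 else lo + j

/-- The node set `V_d` of the graph `G_d`, given by the rules (G1)–(G4).
(Sequences are represented as reversed lists, the head being the last pair
`a_i` of the sequence.) -/
inductive Vd (d : ℕ) : List Nd → Prop
  /-- (G1): the empty sequence is a node. -/
  | nil : Vd d []
  /-- (G2): the sequences `((1,0)), ((2,1)), …, ((d,d−1))` are nodes. -/
  | base (k : ℕ) (h1 : 1 ≤ k) (h2 : k ≤ d) : Vd d [(k, k - 1)]
  /-- (G3): children of a node of odd length `< 2d` with last pair `(b₁, b₂)`: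
  for `j = 1, …, d−1` append `(c₁ʲ, c₂ʲ)` where `c₁ʲ` is the `j`-th smallest
  element of `{1,…,d} \ {b₂⁺}` and `c₂ʲ` the `j`-th smallest of `{1,…,d} \ {b₁}`. -/
  | odd (b₁ b₂ : ℕ) (rest : List Nd)
      (hv : Vd d ((b₁, b₂) :: rest))
      (hodd : Odd ((b₁, b₂) :: rest).length)
      (hlt : ((b₁, b₂) :: rest).length < 2 * d)
      (j : ℕ) (hj1 : 1 ≤ j) (hj2 : j ≤ d - 1) :
      Vd d ((nthAvoid 1 (bplus b₂) j, nthAvoid 1 b₁ j) :: (b₁, b₂) :: rest)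
  /-- (G4): children of a node of even positive length `< 2d` with last pair
  `(b₁, b₂)`: for `j = 1, …, d−1` append `(c₁ʲ, c₂ʲ)` where `c₁ʲ` is the `j`-th
  smallest element of `{1,…,d} \ {b₂}` and `c₂ʲ` the `j`-th smallest of
  `{0,…,d−1} \ {b₁}`. -/
  | even (b₁ b₂ : ℕ) (rest : List Nd)
      (hv : Vd d ((b₁, b₂) :: rest))
      (heven : Even ((b₁, b₂) :: rest).length)
      (hlt : ((b₁, b₂) :: rest).length < 2 * d)
      (j : ℕ) (hj1 : 1 ≤ j) (hj2 : j ≤ d - 1) :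
      Vd d ((nthAvoid 1 b₂ j, nthAvoid 0 b₁ j) :: (b₁, b₂) :: rest)

/-- The edge relation of `G_d`: `u` is a child of `v` or vice versa. -/
def Ed (d : ℕ) (v u : List Nd) : Prop :=
  Vd d v ∧ Vd d u ∧ ∃ a : Nd, u = a :: v ∨ v = a :: u

/-- The outgoing port number `π_d(v, u)` from `v` towards an adjacent node `u`:
if `u = (b₁, b₂) :: v` is a child of `v` then `b₁`, and if `v = (b₁, b₂) :: u`
is a child of `u` then `b₂`. -/
def outPort (v u : List Nd) : ℕ :=
  if u.length = v.length + 1 then u.headI.1 else v.headI.2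

/-- A pair of compatible walks (PCW) of length `k` in `G_d`:
two walks starting at `((1,0))` and `((2,1))` such that the outgoing port
numbers backwards along the walks coincide. -/
structure IsPCW (d k : ℕ) (w₁ w₂ : ℕ → List Nd) : Prop where
  klen : k ≤ 2 * d - 3
  walk₁ : ∀ j < k, Ed d (w₁ j) (w₁ (j + 1))
  walk₂ : ∀ j < k, Ed d (w₂ j) (w₂ (j + 1))
  start₁ : w₁ 0 = [(1, 0)]
  start₂ : w₂ 0 = [(2, 1)]
  compat : ∀ j, 1 ≤ j → j ≤ k →
    outPort (w₁ j) (w₁ (j - 1)) = outPort (w₂ j) (w₂ (j - 1))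

/-- A pair of separating walks (PSW): a PCW such that the last node of the
first walk has a neighbour whose outgoing port number towards it is matched
by no neighbour of the last node of the second walk. -/
structure IsPSW (d k : ℕ) (w₁ w₂ : ℕ → List Nd)
    extends IsPCW d k w₁ w₂ : Prop where
  sep : ∃ x, Ed d (w₁ k) x ∧
    ∀ y, Ed d (w₂ k) y → outPort x (w₁ k) ≠ outPort y (w₂ k)

/-- A PSW of length `k` in `G_d` is critical if there is no strictly shorter
PSW in `G_d`. -/
def IsCriticalPSW (d k : ℕ) (w₁ w₂ : ℕ → List Nd) : Prop :=
  IsPSW d k w₁ w₂ ∧ ∀ k' w₁' w₂', IsPSW d k' w₁' w₂' → k ≤ k'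

/- The parent of `(b₁, b₂) :: rest` contributes the port `b₁`, its children (rule (G3) or (G4),
according to the parity of the length) the ports `c₂ʲ`. -/
def nbrPorts (d : ℕ) : List Nd → Finset ℕ
  | [] => Finset.range d
  | (b₁, _) :: rest =>
      insert b₁ ((Finset.Icc 1 (d - 1)).image
        (nthAvoid (if Even rest.length then 1 else 0) b₁))

lemma nthAvoid_ne_self (lo f : ℕ) {j : ℕ} (hj : 1 ≤ j) : nthAvoid lo f j ≠ f := by
  unfold nthAvoid; split <;> omega

lemma nthAvoid_injOn (lo f : ℕ) : Set.InjOn (nthAvoid lo f) (Set.Ici 1) := by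
  intro j hj j' hj' h
  simp only [Set.mem_Ici] at hj hj'
  unfold nthAvoid at h; split at h <;> split at h <;> omega

lemma card_nbrPorts {d : ℕ} (hd : 1 ≤ d) : ∀ v : List Nd, (nbrPorts d v).card = d
  | [] => Finset.card_range d
  | (b₁, _) :: rest => by
    have hinj : Set.InjOn (nthAvoid (if Even rest.length then 1 else 0) b₁)
        (Finset.Icc 1 (d - 1)) :=
      (nthAvoid_injOn _ _).mono fun j hj => (Finset.mem_Icc.mp hj).1
    have hb₁ : b₁ ∉ (Finset.Icc 1 (d - 1)).image
        (nthAvoid (if Even rest.length then 1 else 0) b₁) := by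
      simp only [Finset.mem_image, Finset.mem_Icc, not_exists, not_and]
      exact fun j hj => nthAvoid_ne_self _ _ hj.1
    rw [nbrPorts, Finset.card_insert_of_notMem hb₁, Finset.card_image_of_injOn hinj,
      Nat.card_Icc]
    omega

@[simp]
lemma outPort_cons_self (a : Nd) (v : List Nd) : outPort (a :: v) v = a.2 := by
  rw [outPort, if_neg (by simp; omega)]
  rfl

@[simp]
lemma outPort_self_cons (a : Nd) (v : List Nd) : outPort v (a :: v) = a.1 := by
  simp [outPort]

lemma Vd.tail {d : ℕ} {v : List Nd} (h : Vd d v) : Vd d v.tail := by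
  cases h with
  | nil | base => exact Vd.nil
  | odd _ _ _ hv | even _ _ _ hv => exact hv

lemma Ed.length_eq_or {d : ℕ} {v u : List Nd} (h : Ed d v u) :
    u.length = v.length + 1 ∨ v.length = u.length + 1 := by
  obtain ⟨-, -, a, rfl | rfl⟩ := h <;> simp

lemma outPort_mem_nbrPorts {d : ℕ} {v x : List Nd} (h : Ed d v x) :
    outPort x v ∈ nbrPorts d v := by
  obtain ⟨-, hx, a, rfl | rfl⟩ := h
  · rw [outPort_cons_self]
    cases hx with
    | base k h1 h2 =>
      simp only [nbrPorts, Finset.mem_range]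
      omega
    | odd b₁ b₂ rest _ hodd _ j hj1 hj2 =>
      have hrest : Even rest.length := by simpa [Nat.odd_add_one] using hodd
      simp only [nbrPorts, hrest, if_true]
      exact Finset.mem_insert_of_mem (Finset.mem_image_of_mem _ (Finset.mem_Icc.mpr ⟨hj1, hj2⟩))
    | even b₁ b₂ rest _ heven _ j hj1 hj2 =>
      have hrest : ¬ Even rest.length := by simpa [Nat.even_add_one] using heven
      simp only [nbrPorts, hrest, if_false]
      exact Finset.mem_insert_of_mem (Finset.mem_image_of_mem _ (Finset.mem_Icc.mpr ⟨hj1, hj2⟩))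
  · simp [nbrPorts]

lemma exists_Ed_outPort_eq {d : ℕ} {v : List Nd} (hv : Vd d v) (hlen : v.length < 2 * d)
    {p : ℕ} (hp : p ∈ nbrPorts d v) : ∃ x, Ed d v x ∧ outPort x v = p := by
  match v, hv, hp with
  | [], _, hp =>
    have hp : p < d := Finset.mem_range.mp hp
    exact ⟨[(p + 1, p)], ⟨Vd.nil, Vd.base (p + 1) (by omega) hp, _, Or.inl rfl⟩,
      outPort_cons_self _ _⟩
  | (b₁, b₂) :: rest, hv, hp =>
    simp only [nbrPorts, Finset.mem_insert, Finset.mem_image, Finset.mem_Icc] at hp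
    obtain rfl | ⟨j, ⟨hj1, hj2⟩, rfl⟩ := hp
    · exact ⟨rest, ⟨hv, hv.tail, _, Or.inr rfl⟩, outPort_self_cons _ _⟩
    by_cases hrest : Even rest.length
    · have hodd : Odd ((b₁, b₂) :: rest).length := by simpa [Nat.odd_add_one] using hrest
      exact ⟨_, ⟨hv, Vd.odd b₁ b₂ rest hv hodd hlen j hj1 hj2, _, Or.inl rfl⟩,
        by simp [hrest]⟩
    · have heven : Even ((b₁, b₂) :: rest).length := by simpa [Nat.even_add_one] using hrest
      exact ⟨_, ⟨hv, Vd.even b₁ b₂ rest hv heven hlen j hj1 hj2, _, Or.inl rfl⟩,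
        by simp [hrest]⟩

theorem exists_Ed_outPort_eq_of_forall {d : ℕ} (hd : 1 ≤ d) {v u : List Nd} (hv : Vd d v)
    (hlen : v.length < 2 * d)
    (h : ∀ x, Ed d v x → ∃ y, Ed d u y ∧ outPort x v = outPort y u) :
    ∀ y, Ed d u y → ∃ x, Ed d v x ∧ outPort x v = outPort y u := by
  have hsub : nbrPorts d v ⊆ nbrPorts d u := by
    intro p hp
    obtain ⟨x, hx, rfl⟩ := exists_Ed_outPort_eq hv hlen hp
    obtain ⟨y, hy, hxy⟩ := h x hx
    exact hxy ▸ outPort_mem_nbrPorts hy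
  have heq : nbrPorts d v = nbrPorts d u :=
    Finset.eq_of_subset_of_card_le hsub (by rw [card_nbrPorts hd, card_nbrPorts hd])
  intro y hy
  exact exists_Ed_outPort_eq hv hlen (heq ▸ outPort_mem_nbrPorts hy)

section Walk

variable {d k : ℕ} {w : ℕ → List Nd}

lemma Vd_walk_end (hw : ∀ j < k, Ed d (w j) (w (j + 1))) (h0 : Vd d (w 0)) : Vd d (w k) := by
  cases k with
  | zero => exact h0
  | succ n => exact (hw n n.lt_succ_self).2.1

lemma length_walk_le (hw : ∀ j < k, Ed d (w j) (w (j + 1))) :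
    ∀ j ≤ k, (w j).length ≤ (w 0).length + j
  | 0, _ => le_rfl
  | j + 1, hj => by
    have ih := length_walk_le hw j (by omega)
    have := (hw j (by omega)).length_eq_or
    omega

end Walk

namespace IsPCW

variable {d k : ℕ} {w₁ w₂ : ℕ → List Nd}

lemma Vd_end₁ (hpcw : IsPCW d k w₁ w₂) (hd : 1 ≤ d) : Vd d (w₁ k) :=
  Vd_walk_end hpcw.walk₁ (hpcw.start₁ ▸ Vd.base 1 le_rfl hd)

lemma length_end₁_lt (hpcw : IsPCW d k w₁ w₂) (hd : 1 ≤ d) : (w₁ k).length < 2 * d := by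
  have hlen := length_walk_le hpcw.walk₁ k le_rfl
  rw [hpcw.start₁, List.length_singleton] at hlen
  have := hpcw.klen
  omega

lemma forall_exists_outPort_eq_of_not_isPSW (hpcw : IsPCW d k w₁ w₂)
    (hnpsw : ¬ IsPSW d k w₁ w₂) :
    ∀ x, Ed d (w₁ k) x → ∃ y, Ed d (w₂ k) y ∧ outPort x (w₁ k) = outPort y (w₂ k) := by
  by_contra! h
  exact hnpsw ⟨hpcw, h⟩

end IsPCW

/-- If a PCW is not a PSW, then the end nodes of the two walks have matching
neighbours in both directions. -/
theorem PCW_symmetry (d k : ℕ) (hd : 2 ≤ d) (w₁ w₂ : ℕ → List Nd)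
    (hpcw : IsPCW d k w₁ w₂) (hnpsw : ¬ IsPSW d k w₁ w₂) :
    (∀ x, Ed d (w₁ k) x →
      ∃ y, Ed d (w₂ k) y ∧ outPort x (w₁ k) = outPort y (w₂ k)) ∧
    (∀ y, Ed d (w₂ k) y →
      ∃ x, Ed d (w₁ k) x ∧ outPort x (w₁ k) = outPort y (w₂ k)) := by
  have hd₁ : 1 ≤ d := by omega
  have forward := hpcw.forall_exists_outPort_eq_of_not_isPSW hnpsw
  exact ⟨forward, exists_Ed_outPort_eq_of_forall hd₁ (hpcw.Vd_end₁ hd₁)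
    (hpcw.length_end₁_lt hd₁) forward⟩

end Paper
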